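/- Let n ≥ 2. Every spherical design X of harmonic index 4 on the unit sphere S^{n-1} ⊆ ℝ^n satisfies 6·|X| ≥ (n+1)(n+2), i.e., |X| ≥ (n+1)(n+2)/6. -/

import Mathlib

open scoped BigOperators Classical

/-- The Laplacian `∑ i, ∂²/∂xᵢ²` of a multivariate polynomial. -/
noncomputable def mvLaplacian {n : ℕ} (f : MvPolynomial (Fin n) ℝ) : MvPolynomial (Fin n) ℝ :=
  ∑ i, MvPolynomial.pderiv i (MvPolynomial.pderiv i f)

/-- A finite nonempty subset `X` of the unit sphere `S^{n-1} ⊆ ℝ^n` is a spherical design of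
harmonic index `t` if `∑_{x ∈ X} f(x) = 0` for every harmonic homogeneous polynomial `f`
of degree `t`. -/
def IsHarmonicIndexDesign (n t : ℕ) (X : Finset (Fin n → ℝ)) : Prop :=
  X.Nonempty ∧ (∀ x ∈ X, ∑ i, x i ^ 2 = 1) ∧
    ∀ f : MvPolynomial (Fin n) ℝ, mvLaplacian f = 0 → f.IsHomogeneous t →
      ∑ x ∈ X, MvPolynomial.eval x f = 0

namespace FisherAux

open MvPolynomial

variable {n : ℕ}

/-- the linear form `⟨x,y⟩` as a polynomial in `x`. -/
noncomputable def Lp (y : Fin n → ℝ) : MvPolynomial (Fin n) ℝ := ∑ i, C (y i) * X i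

/-- the squared radius `|x|²`. -/
noncomputable def Rp (n : ℕ) : MvPolynomial (Fin n) ℝ := ∑ i, X i ^ 2

lemma pderiv_Lp (y : Fin n → ℝ) (i : Fin n) : pderiv i (Lp y) = C (y i) := by
  simp [Lp, map_sum, pderiv_C_mul, pderiv_X, Pi.single_apply]

lemma pderiv_Rp (i : Fin n) : pderiv i (Rp n) = 2 * X i := by
  simp only [Rp, map_sum, sq, pderiv_mul, pderiv_X, Pi.single_apply, ite_mul, one_mul,
    zero_mul, mul_ite, mul_one, mul_zero, Finset.sum_add_distrib, Finset.sum_ite_eq,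
    Finset.sum_ite_eq', Finset.mem_univ, if_true]
  ring

lemma lap_mul (f g : MvPolynomial (Fin n) ℝ) :
    mvLaplacian (f * g) =
      f * mvLaplacian g + g * mvLaplacian f + 2 * ∑ i, pderiv i f * pderiv i g := by
  unfold mvLaplacian
  have h : ∀ i : Fin n, pderiv i (pderiv i (f * g)) =
      pderiv i (pderiv i f) * g + 2 * (pderiv i f * pderiv i g) + f * pderiv i (pderiv i g) := by
    intro i
    simp only [pderiv_mul, map_add]
    ring
  rw [Finset.sum_congr rfl fun i _ => h i]
  simp only [Finset.sum_add_distrib, ← Finset.sum_mul, ← Finset.mul_sum]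
  ring

lemma lap_Lp (y : Fin n → ℝ) : mvLaplacian (Lp y) = 0 := by
  unfold mvLaplacian
  simp [pderiv_Lp, pderiv_C]

lemma lap_Rp : mvLaplacian (Rp n) = C (2 * (n : ℝ)) := by
  unfold mvLaplacian
  have h : ∀ i : Fin n, pderiv i (pderiv i (Rp n)) = (C 2 : MvPolynomial (Fin n) ℝ) := by
    intro i
    rw [pderiv_Rp, show ((2 : MvPolynomial (Fin n) ℝ)) = C 2 from (map_ofNat C 2).symm, pderiv_C_mul]
    simp [pderiv_X]
  rw [Finset.sum_congr rfl fun i _ => h i, Finset.sum_const, Finset.card_univ,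
    Fintype.card_fin, nsmul_eq_mul]
  simp only [C_mul, map_natCast, map_ofNat]
  ring

lemma grad_LL (y : Fin n → ℝ) (hy : ∑ i, y i ^ 2 = 1) :
    ∑ i, pderiv i (Lp y) * pderiv i (Lp y) = 1 := by
  simp only [pderiv_Lp, ← C_mul, ← map_sum]
  rw [show ∑ i, y i * y i = ∑ i, y i ^ 2 by simp [sq], hy, C_1]

lemma lap_Lp2 (y : Fin n → ℝ) (hy : ∑ i, y i ^ 2 = 1) :
    mvLaplacian (Lp y ^ 2) = 2 := by
  rw [sq, lap_mul, lap_Lp, grad_LL y hy]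
  ring

lemma grad_L2L2 (y : Fin n → ℝ) (hy : ∑ i, y i ^ 2 = 1) :
    ∑ i, pderiv i (Lp y ^ 2) * pderiv i (Lp y ^ 2) = 4 * Lp y ^ 2 := by
  have h : ∀ i : Fin n, pderiv i (Lp y ^ 2) = 2 * Lp y * C (y i) := by
    intro i; rw [sq, pderiv_mul, pderiv_Lp]; ring
  calc ∑ i, pderiv i (Lp y ^ 2) * pderiv i (Lp y ^ 2)
      = ∑ i, (4 * Lp y ^ 2) * C (y i * y i) := by
        apply Finset.sum_congr rfl; intro i _; rw [h i, C_mul]; ring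
    _ = (4 * Lp y ^ 2) * C (∑ i, y i * y i) := by rw [← Finset.mul_sum, ← map_sum]
    _ = 4 * Lp y ^ 2 := by
        rw [show ∑ i, y i * y i = ∑ i, y i ^ 2 by simp [sq], hy, C_1, mul_one]

lemma lap_Lp4 (y : Fin n → ℝ) (hy : ∑ i, y i ^ 2 = 1) :
    mvLaplacian (Lp y ^ 4) = 12 * Lp y ^ 2 := by
  have : (Lp y) ^ 4 = Lp y ^ 2 * Lp y ^ 2 := by ring
  rw [this, lap_mul, lap_Lp2 y hy, grad_L2L2 y hy]
  ring

lemma grad_L2R (y : Fin n → ℝ) :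
    ∑ i, pderiv i (Lp y ^ 2) * pderiv i (Rp n) = 4 * Lp y ^ 2 := by
  have h : ∀ i : Fin n, pderiv i (Lp y ^ 2) * pderiv i (Rp n)
      = 4 * Lp y * (C (y i) * X i) := by
    intro i
    rw [sq, pderiv_mul, pderiv_Lp, pderiv_Rp]
    ring
  rw [Finset.sum_congr rfl fun i _ => h i, ← Finset.mul_sum, ← Lp]
  ring

lemma grad_RR : ∑ i, pderiv i (Rp n) * pderiv i (Rp n) = 4 * Rp n := by
  have h : ∀ i : Fin n, pderiv i (Rp n) * pderiv i (Rp n) = 4 * X i ^ 2 := by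
    intro i; rw [pderiv_Rp]; ring
  rw [Finset.sum_congr rfl fun i _ => h i, ← Finset.mul_sum, ← Rp]

lemma lap_L2R (y : Fin n → ℝ) (hy : ∑ i, y i ^ 2 = 1) :
    mvLaplacian (Lp y ^ 2 * Rp n) = C (2 * (n : ℝ)) * Lp y ^ 2 + 2 * Rp n + 8 * Lp y ^ 2 := by
  rw [lap_mul, lap_Rp, lap_Lp2 y hy, grad_L2R y]
  ring

lemma lap_R2 : mvLaplacian ((Rp n) ^ 2) = C (2 * (n : ℝ)) * (2 * Rp n) + 8 * Rp n := by
  rw [sq, lap_mul, lap_Rp, grad_RR]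
  ring

lemma lap_add (f g : MvPolynomial (Fin n) ℝ) :
    mvLaplacian (f + g) = mvLaplacian f + mvLaplacian g := by
  unfold mvLaplacian; simp [Finset.sum_add_distrib]

lemma lap_sub (f g : MvPolynomial (Fin n) ℝ) :
    mvLaplacian (f - g) = mvLaplacian f - mvLaplacian g := by
  unfold mvLaplacian; simp [Finset.sum_sub_distrib]

lemma lap_C_mul (a : ℝ) (f : MvPolynomial (Fin n) ℝ) :
    mvLaplacian (C a * f) = C a * mvLaplacian f := by
  unfold mvLaplacian; simp [pderiv_C_mul, Finset.mul_sum]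

/-- The harmonic polynomial `p_y`. -/
noncomputable def Pp (n : ℕ) (y : Fin n → ℝ) : MvPolynomial (Fin n) ℝ :=
  C (((n : ℝ) + 2) * ((n : ℝ) + 4)) * Lp y ^ 4
    - C (6 * ((n : ℝ) + 2)) * (Lp y ^ 2 * Rp n) + C 3 * (Rp n) ^ 2

lemma lap_Pp (y : Fin n → ℝ) (hy : ∑ i, y i ^ 2 = 1) : mvLaplacian (Pp n y) = 0 := by
  unfold Pp
  rw [lap_add, lap_sub, lap_C_mul, lap_C_mul, lap_C_mul, lap_Lp4 y hy, lap_L2R y hy, lap_R2]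
  simp only [C_mul, C_add, map_natCast, map_ofNat]
  ring

lemma homog_Pp (y : Fin n → ℝ) : (Pp n y).IsHomogeneous 4 := by
  have hL : (Lp y).IsHomogeneous 1 := by
    apply IsHomogeneous.sum
    intro i _
    simpa using (isHomogeneous_C _ (y i)).mul (isHomogeneous_X _ i)
  have hR : (Rp n).IsHomogeneous 2 := by
    apply IsHomogeneous.sum
    intro i _
    exact isHomogeneous_X_pow (R := ℝ) i 2
  have h1 : (C (((n : ℝ) + 2) * ((n : ℝ) + 4)) * Lp y ^ 4).IsHomogeneous 4 :=
    (hL.pow 4).C_mul _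
  have h2 : (C (6 * ((n : ℝ) + 2)) * (Lp y ^ 2 * Rp n)).IsHomogeneous 4 :=
    ((hL.pow 2).mul hR).C_mul _
  have h3 : ((C 3 : MvPolynomial (Fin n) ℝ) * (Rp n) ^ 2).IsHomogeneous 4 :=
    (hR.pow 2).C_mul _
  exact (h1.sub h2).add h3

lemma eval_Lp (x y : Fin n → ℝ) : eval x (Lp y) = ∑ i, y i * x i := by
  simp [Lp]

lemma eval_Rp (x : Fin n → ℝ) : eval x (Rp n) = ∑ i, x i ^ 2 := by
  simp [Rp]

lemma eval_Pp (x y : Fin n → ℝ) (hx : ∑ i, x i ^ 2 = 1) :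
    eval x (Pp n y) =
      (((n : ℝ) + 2) * ((n : ℝ) + 4)) * (∑ i, y i * x i) ^ 4
        - (6 * ((n : ℝ) + 2)) * (∑ i, y i * x i) ^ 2 + 3 := by
  simp only [Pp, map_add, map_sub, map_mul, map_pow, eval_C, eval_Lp, eval_Rp, hx]
  ring

end FisherAux

/-- every spherical design of harmonic index `4` on `S^{n-1}` satisfies
`6·|X| ≥ (n+1)(n+2)`, i.e. `|X| ≥ (n+1)(n+2)/6`. -/
theorem fisher_bound_harmonic_index_four (n : ℕ) (hn : 2 ≤ n)
    (X : Finset (Fin n → ℝ)) (hX : IsHarmonicIndexDesign n 4 X) :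
    (n + 1) * (n + 2) ≤ 6 * X.card := by
  classical
  obtain ⟨hne, hsph, hdes⟩ := hX
  set N : ℝ := (X.card : ℝ) with hN
  set s : (Fin n → ℝ) → (Fin n → ℝ) → ℝ := fun x y => ∑ i, y i * x i with hs
  -- the design condition applied to each `p_y`
  have key : ∀ y ∈ X, ∑ x ∈ X,
      ((((n : ℝ) + 2) * ((n : ℝ) + 4)) * (s x y) ^ 4
        - (6 * ((n : ℝ) + 2)) * (s x y) ^ 2 + 3) = 0 := by
    intro y hy
    have h0 := hdes (FisherAux.Pp n y) (FisherAux.lap_Pp y (hsph y hy)) (FisherAux.homog_Pp y)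
    rw [← h0]
    apply Finset.sum_congr rfl
    intro x hx
    rw [FisherAux.eval_Pp x y (hsph x hx)]
  -- double sum is zero
  have hdouble : ∑ y ∈ X, ∑ x ∈ X,
      ((((n : ℝ) + 2) * ((n : ℝ) + 4)) * (s x y) ^ 4
        - (6 * ((n : ℝ) + 2)) * (s x y) ^ 2 + 3) = 0 :=
    Finset.sum_eq_zero key
  -- pointwise algebraic identity (perfect square)
  have hid : ∀ x y : Fin n → ℝ,
      ((n : ℝ) + 4) * ((((n : ℝ) + 2) * ((n : ℝ) + 4)) * (s x y) ^ 4
        - (6 * ((n : ℝ) + 2)) * (s x y) ^ 2 + 3)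
      = ((n : ℝ) + 2) * (((n : ℝ) + 4) * (s x y) ^ 2 - 3) ^ 2 - 6 * ((n : ℝ) + 1) := by
    intro x y; ring
  -- hence the sum of squares equals 6(n+1)N²
  have hsq : ∑ y ∈ X, ∑ x ∈ X, ((n : ℝ) + 2) * (((n : ℝ) + 4) * (s x y) ^ 2 - 3) ^ 2
      = 6 * ((n : ℝ) + 1) * N ^ 2 := by
    have := congrArg (fun t => ((n : ℝ) + 4) * t) hdouble
    simp only [Finset.mul_sum, mul_zero] at this
    have h2 : ∑ y ∈ X, ∑ x ∈ X,
        (((n : ℝ) + 2) * (((n : ℝ) + 4) * (s x y) ^ 2 - 3) ^ 2 - 6 * ((n : ℝ) + 1)) = 0 := by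
      rw [← this]
      exact Finset.sum_congr rfl fun y _ => Finset.sum_congr rfl fun x _ => (hid x y).symm
    have h3 : ∑ y ∈ X, ∑ x ∈ X,
        (((n : ℝ) + 2) * (((n : ℝ) + 4) * (s x y) ^ 2 - 3) ^ 2 - 6 * ((n : ℝ) + 1))
        = (∑ y ∈ X, ∑ x ∈ X, ((n : ℝ) + 2) * (((n : ℝ) + 4) * (s x y) ^ 2 - 3) ^ 2)
          - N ^ 2 * (6 * ((n : ℝ) + 1)) := by
      simp [Finset.sum_sub_distrib, hN, sq]
      ring
    rw [h3] at h2
    linarith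
  -- lower bound by diagonal terms
  have hdiag : ∀ y ∈ X, s y y = 1 := by
    intro y hy
    have := hsph y hy
    simpa [hs, sq] using this
  have hlow : ((n : ℝ) + 2) * ((n : ℝ) + 1) ^ 2 * N
      ≤ ∑ y ∈ X, ∑ x ∈ X, ((n : ℝ) + 2) * (((n : ℝ) + 4) * (s x y) ^ 2 - 3) ^ 2 := by
    have hterm : ∀ y ∈ X, ((n : ℝ) + 2) * ((n : ℝ) + 1) ^ 2
        ≤ ∑ x ∈ X, ((n : ℝ) + 2) * (((n : ℝ) + 4) * (s x y) ^ 2 - 3) ^ 2 := by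
      intro y hy
      have := Finset.single_le_sum
        (f := fun x => ((n : ℝ) + 2) * (((n : ℝ) + 4) * (s x y) ^ 2 - 3) ^ 2)
        (fun x _ => by positivity) hy
      calc ((n : ℝ) + 2) * ((n : ℝ) + 1) ^ 2
          = ((n : ℝ) + 2) * (((n : ℝ) + 4) * (s y y) ^ 2 - 3) ^ 2 := by
            rw [hdiag y hy]; ring
        _ ≤ _ := this
    calc ((n : ℝ) + 2) * ((n : ℝ) + 1) ^ 2 * N
        = ∑ _y ∈ X, ((n : ℝ) + 2) * ((n : ℝ) + 1) ^ 2 := by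
          rw [Finset.sum_const, hN]; ring
      _ ≤ _ := Finset.sum_le_sum hterm
  have hNpos : (0 : ℝ) < N := by
    rw [hN]
    exact_mod_cast Finset.card_pos.mpr hne
  -- combine: (n+2)(n+1)² N ≤ 6(n+1) N²
  have hcomb : ((n : ℝ) + 2) * ((n : ℝ) + 1) ^ 2 * N ≤ 6 * ((n : ℝ) + 1) * N ^ 2 := by
    rw [← hsq]; exact hlow
  have hfin : ((n : ℝ) + 1) * ((n : ℝ) + 2) ≤ 6 * N := by
    have hpos : (0 : ℝ) < ((n : ℝ) + 1) * N := by positivity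
    have h2 : (((n : ℝ) + 1) * N) * (((n : ℝ) + 1) * ((n : ℝ) + 2))
        ≤ (((n : ℝ) + 1) * N) * (6 * N) := by
      have e1 : (((n : ℝ) + 1) * N) * (((n : ℝ) + 1) * ((n : ℝ) + 2))
          = ((n : ℝ) + 2) * ((n : ℝ) + 1) ^ 2 * N := by ring
      have e2 : (((n : ℝ) + 1) * N) * (6 * N) = 6 * ((n : ℝ) + 1) * N ^ 2 := by ring
      rw [e1, e2]
      exact hcomb
    exact (mul_le_mul_iff_right₀ hpos).mp h2
  have : ((n : ℝ) + 1) * ((n : ℝ) + 2) ≤ 6 * (X.card : ℝ) := by rwa [hN] at hfin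
  exact_mod_cast this
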